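/- If 0 < r ≤ 2/√ε then ψ₁(r) ≤ √(2/(c-ε))·e²·r, and if r > 2/√ε then ψ₁(r) ≤ 2√2·e²/√(ε(c-ε)) + 2 e^{ε r²/2}/(ε(c-ε) r²). -/

import Mathlib

open MeasureTheory Real

/-- `ψ₁ c ε r = ∫₀^r e^{c s²/2} (∫_s^∞ e^{-(c-ε) u²/2} du) ds`. -/
noncomputable def psi1 (c ε r : ℝ) : ℝ :=
  ∫ s in (0:ℝ)..r, Real.exp (c * s ^ 2 / 2) * ∫ u in Set.Ioi s, Real.exp (-(c - ε) * u ^ 2 / 2)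

/-!
Write `k = c - ε` and `G(s) = ∫_s^∞ e^{-k u²/2} du`, so that the integrand of `ψ₁` is
`e^{ε s²/2} · e^{k s²/2} G(s)`. Two classical bounds on the Gaussian tail do the work:
`e^{k s²/2} G(s) ≤ ∫_0^∞ e^{-k x²/2} dx ≤ √(2/k)` (shift `u = s + x` and use `s x ≥ 0`), and
the Mills ratio bound `G(s) ≤ e^{-k s²/2}/(k s)` (compare with `∫_s^∞ (u/s) e^{-k u²/2} du`).
Up to `r₀ = 2/√ε` the factor `e^{ε s²/2}` is at most `e²`, which gives the linear bound. Beyond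
`r₀` the integrand is at most `e^{ε s²/2}/(k s)`, and since `ε s² ≥ 4` there this is dominated by
the derivative of `2 e^{ε s²/2}/(ε k s²)`.
-/

open Set Filter Topology

noncomputable def gaussianTail (k s : ℝ) : ℝ := ∫ u in Ioi s, exp (-k * u ^ 2 / 2)

lemma integral_Ioi_comp_sub_right {E : Type*} [NormedAddCommGroup E] [NormedSpace ℝ E]
    (f : ℝ → E) (a : ℝ) : ∫ u in Ioi a, f (u - a) = ∫ x in Ioi 0, f x := by
  have h := (measurePreserving_add_right volume a).setIntegral_preimage_emb
    (MeasurableEquiv.addRight a).measurableEmbedding (fun u => f (u - a)) (Ioi a)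
  have hpre : (fun x : ℝ => x + a) ⁻¹' Ioi a = Ioi 0 := by ext x; simp
  simpa [hpre] using h.symm

section GaussianTail

variable {k : ℝ}

lemma integrable_exp_neg_mul_sq_div_two (hk : 0 < k) :
    Integrable fun u : ℝ => exp (-k * u ^ 2 / 2) :=
  (integrable_exp_neg_mul_sq (half_pos hk)).congr (.of_forall fun u => by ring_nf)

lemma gaussianTail_antitone (hk : 0 < k) : Antitone (gaussianTail k) := fun _ _ hst =>
  setIntegral_mono_set (integrable_exp_neg_mul_sq_div_two hk).integrableOn
    (.of_forall fun _ => (exp_pos _).le) (Ioi_subset_Ioi hst).eventuallyLE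

lemma exp_mul_gaussianTail_le_sqrt (hk : 0 < k) {s : ℝ} (hs : 0 ≤ s) :
    exp (k * s ^ 2 / 2) * gaussianTail k s ≤ √(2 / k) := by
  have hshift : Integrable fun u : ℝ => exp (-k * (u - s) ^ 2 / 2) :=
    (integrable_exp_neg_mul_sq_div_two hk).comp_sub_right s
  have hhalf : √(π / (k / 2)) / 2 ≤ √(2 / k) := by
    rw [div_le_iff₀ two_pos, sqrt_le_iff]
    refine ⟨by positivity, ?_⟩
    rw [mul_pow, sq_sqrt (by positivity), div_div_eq_mul_div, div_mul_eq_mul_div,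
      div_le_div_iff_of_pos_right hk]
    nlinarith [pi_le_four]
  calc exp (k * s ^ 2 / 2) * gaussianTail k s
      = ∫ u in Ioi s, exp (k * s ^ 2 / 2) * exp (-k * u ^ 2 / 2) :=
        (integral_const_mul _ _).symm
    _ ≤ ∫ u in Ioi s, exp (-k * (u - s) ^ 2 / 2) := by
        refine setIntegral_mono_on ((integrable_exp_neg_mul_sq_div_two hk).integrableOn.const_mul _)
          hshift.integrableOn measurableSet_Ioi fun u hu => ?_
        rw [← exp_add, exp_le_exp]
        nlinarith [mul_nonneg (mul_nonneg hk.le hs) (sub_nonneg.2 (le_of_lt hu))]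
    _ = ∫ x in Ioi 0, exp (-(k / 2) * x ^ 2) := by
        rw [integral_Ioi_comp_sub_right (fun x => exp (-k * x ^ 2 / 2))]
        ring_nf
    _ = √(π / (k / 2)) / 2 := integral_gaussian_Ioi _
    _ ≤ √(2 / k) := hhalf

lemma gaussianTail_le_exp_div (hk : 0 < k) {s : ℝ} (hs : 0 < s) :
    gaussianTail k s ≤ exp (-k * s ^ 2 / 2) / (k * s) := by
  have hderiv : ∀ x ∈ Ici s, HasDerivAt (fun u => -exp (-k * u ^ 2 / 2) / k)
      (x * exp (-k * x ^ 2 / 2)) x := fun x _ => by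
    refine ((((hasDerivAt_pow 2 x).const_mul (-k)).div_const 2).exp.neg.div_const k).congr_deriv ?_
    field_simp
    ring
  have hnonneg : ∀ x ∈ Ioi s, 0 ≤ x * exp (-k * x ^ 2 / 2) := fun x hx =>
    mul_nonneg (hs.trans hx).le (exp_pos _).le
  have hlim : Tendsto (fun u => -exp (-k * u ^ 2 / 2) / k) atTop (𝓝 0) := by
    have hexp : Tendsto (fun u : ℝ => -k * u ^ 2 / 2) atTop atBot :=
      ((tendsto_pow_atTop two_ne_zero).const_mul_atTop_of_neg (neg_neg_of_pos hk)).atBot_div_const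
        two_pos
    simpa using ((tendsto_exp_atBot.comp hexp).neg.div_const k)
  calc gaussianTail k s ≤ ∫ u in Ioi s, s⁻¹ * (u * exp (-k * u ^ 2 / 2)) := by
        refine setIntegral_mono_on (integrable_exp_neg_mul_sq_div_two hk).integrableOn
          ((integrableOn_Ioi_deriv_of_nonneg' hderiv hnonneg hlim).const_mul _)
          measurableSet_Ioi fun u hu => ?_
        rw [← mul_assoc]
        exact le_mul_of_one_le_left (exp_pos _).le
          ((one_le_inv_mul₀ hs).2 (le_of_lt hu))
    _ = exp (-k * s ^ 2 / 2) / (k * s) := by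
        rw [integral_const_mul, integral_Ioi_of_hasDerivAt_of_nonneg' hderiv hnonneg hlim]
        field_simp
        ring

end GaussianTail

lemma continuousOn_exp_mul_sq_div {ε k a b : ℝ} (hk : k ≠ 0) (ha : 0 < a) :
    ContinuousOn (fun s => exp (ε * s ^ 2 / 2) / (k * s)) (Icc a b) :=
  continuousOn_of_forall_continuousAt fun x hx => by
    have hx0 : x ≠ 0 := (ha.trans_le hx.1).ne'
    fun_prop (disch := positivity)

lemma integral_exp_div_le {ε k a b : ℝ} (hk : 0 < k) (ha : 0 < a) (hab : a ≤ b)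
    (h4 : 4 ≤ ε * a ^ 2) :
    ∫ s in a..b, exp (ε * s ^ 2 / 2) / (k * s) ≤ 2 * exp (ε * b ^ 2 / 2) / (ε * k * b ^ 2) := by
  have hε : 0 < ε := pos_of_mul_pos_left (by linarith) (sq_nonneg a)
  have hderiv : ∀ x ∈ Icc a b, HasDerivAt (fun s => 2 * exp (ε * s ^ 2 / 2) / (ε * k * s ^ 2))
      (2 * exp (ε * x ^ 2 / 2) * (ε * x ^ 2 - 2) / (ε * k * x ^ 3)) x := fun x hx => by
    have hx : 0 < x := ha.trans_le hx.1
    refine (((((hasDerivAt_pow 2 x).const_mul ε).div_const 2).exp.const_mul 2).div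
      ((hasDerivAt_pow 2 x).const_mul (ε * k)) (by positivity)).congr_deriv ?_
    field_simp
    ring
  have hle : ∀ x ∈ Ioo a b, exp (ε * x ^ 2 / 2) / (k * x)
      ≤ 2 * exp (ε * x ^ 2 / 2) * (ε * x ^ 2 - 2) / (ε * k * x ^ 3) := fun x hx => by
    have hx0 : 0 < x := ha.trans hx.1
    have hx4 : 4 ≤ ε * x ^ 2 := h4.trans (by gcongr; exact hx.1.le)
    rw [div_le_div_iff₀ (by positivity) (by positivity)]
    nlinarith [mul_nonneg (mul_nonneg (exp_pos (ε * x ^ 2 / 2)).le (mul_pos hk hx0).le)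
      (sub_nonneg.2 hx4)]
  calc ∫ s in a..b, exp (ε * s ^ 2 / 2) / (k * s)
      ≤ 2 * exp (ε * b ^ 2 / 2) / (ε * k * b ^ 2) - 2 * exp (ε * a ^ 2 / 2) / (ε * k * a ^ 2) :=
        intervalIntegral.integral_le_sub_of_hasDeriv_right_of_le hab
          (fun x hx => (hderiv x hx).continuousAt.continuousWithinAt)
          (fun x hx => (hderiv x (Ioo_subset_Icc_self hx)).hasDerivWithinAt)
          (continuousOn_exp_mul_sq_div hk.ne' ha).integrableOn_Icc hle
    _ ≤ 2 * exp (ε * b ^ 2 / 2) / (ε * k * b ^ 2) := sub_le_self _ (by positivity)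

section Psi1

variable {c ε : ℝ}

lemma psi1_eq_integral_gaussianTail (c ε r : ℝ) :
    psi1 c ε r = ∫ s in (0:ℝ)..r, exp (c * s ^ 2 / 2) * gaussianTail (c - ε) s := rfl

lemma intervalIntegrable_exp_mul_gaussianTail {k : ℝ} (hk : 0 < k) (c a b : ℝ) :
    IntervalIntegrable (fun s => exp (c * s ^ 2 / 2) * gaussianTail k s) volume a b :=
  (gaussianTail_antitone hk).intervalIntegrable.continuousOn_mul (by fun_prop)

lemma psi1_eq_add_integral (hεc : ε < c) (a r : ℝ) :
    psi1 c ε r = psi1 c ε a + ∫ s in a..r, exp (c * s ^ 2 / 2) * gaussianTail (c - ε) s := by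
  simp only [psi1_eq_integral_gaussianTail]
  exact (intervalIntegral.integral_add_adjacent_intervals
    (intervalIntegrable_exp_mul_gaussianTail (sub_pos.2 hεc) c _ _)
    (intervalIntegrable_exp_mul_gaussianTail (sub_pos.2 hεc) c _ _)).symm

lemma exp_mul_gaussianTail_le_of_mul_sq_le (hεc : ε < c) {s : ℝ} (hs : 0 ≤ s)
    (hs4 : ε * s ^ 2 ≤ 4) :
    exp (c * s ^ 2 / 2) * gaussianTail (c - ε) s ≤ √(2 / (c - ε)) * exp 2 := by
  have hsplit : exp (c * s ^ 2 / 2) = exp ((c - ε) * s ^ 2 / 2) * exp (ε * s ^ 2 / 2) := by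
    rw [← exp_add]; ring_nf
  rw [hsplit, mul_right_comm]
  exact mul_le_mul (exp_mul_gaussianTail_le_sqrt (sub_pos.2 hεc) hs)
    (exp_le_exp.2 (by linarith)) (exp_pos _).le (sqrt_nonneg _)

lemma exp_mul_gaussianTail_le_exp_div (hεc : ε < c) {s : ℝ} (hs : 0 < s) :
    exp (c * s ^ 2 / 2) * gaussianTail (c - ε) s ≤ exp (ε * s ^ 2 / 2) / ((c - ε) * s) := by
  calc exp (c * s ^ 2 / 2) * gaussianTail (c - ε) s
      ≤ exp (c * s ^ 2 / 2) * (exp (-(c - ε) * s ^ 2 / 2) / ((c - ε) * s)) :=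
        mul_le_mul_of_nonneg_left (gaussianTail_le_exp_div (sub_pos.2 hεc) hs) (exp_pos _).le
    _ = exp (ε * s ^ 2 / 2) / ((c - ε) * s) := by
        rw [mul_div_assoc', ← exp_add]; ring_nf

lemma psi1_le_of_mul_sq_le (hεc : ε < c) {r : ℝ} (hr : 0 ≤ r) (hr4 : ε * r ^ 2 ≤ 4) :
    psi1 c ε r ≤ √(2 / (c - ε)) * exp 2 * r := by
  rw [psi1_eq_integral_gaussianTail]
  calc (∫ s in (0:ℝ)..r, exp (c * s ^ 2 / 2) * gaussianTail (c - ε) s)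
      ≤ ∫ _ in (0:ℝ)..r, √(2 / (c - ε)) * exp 2 :=
        intervalIntegral.integral_mono_on hr
          (intervalIntegrable_exp_mul_gaussianTail (sub_pos.2 hεc) c _ _) intervalIntegrable_const
          fun s hs => exp_mul_gaussianTail_le_of_mul_sq_le hεc hs.1 <| by
            rcases le_total 0 ε with hε | hε
            · exact hr4.trans' (by gcongr; exacts [hs.1, hs.2])
            · nlinarith [sq_nonneg s]
    _ = √(2 / (c - ε)) * exp 2 * r := by
        rw [intervalIntegral.integral_const, sub_zero, smul_eq_mul, mul_comm]

lemma integral_exp_mul_gaussianTail_le (hεc : ε < c) {a r : ℝ} (ha : 0 < a) (har : a ≤ r)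
    (ha4 : 4 ≤ ε * a ^ 2) :
    ∫ s in a..r, exp (c * s ^ 2 / 2) * gaussianTail (c - ε) s
      ≤ 2 * exp (ε * r ^ 2 / 2) / (ε * (c - ε) * r ^ 2) :=
  calc ∫ s in a..r, exp (c * s ^ 2 / 2) * gaussianTail (c - ε) s
      ≤ ∫ s in a..r, exp (ε * s ^ 2 / 2) / ((c - ε) * s) :=
        intervalIntegral.integral_mono_on har
          (intervalIntegrable_exp_mul_gaussianTail (sub_pos.2 hεc) c _ _)
          ((continuousOn_exp_mul_sq_div (sub_pos.2 hεc).ne' ha).intervalIntegrable_of_Icc har)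
          fun _ hs => exp_mul_gaussianTail_le_exp_div hεc (ha.trans_le hs.1)
    _ ≤ 2 * exp (ε * r ^ 2 / 2) / (ε * (c - ε) * r ^ 2) :=
        integral_exp_div_le (sub_pos.2 hεc) ha har ha4

end Psi1

theorem stmt_6 (c ε : ℝ) (hε : 0 < ε) (hεc : ε < c) :
    (∀ r : ℝ, 0 < r → r ≤ 2 / Real.sqrt ε →
      psi1 c ε r ≤ Real.sqrt (2 / (c - ε)) * Real.exp 2 * r) ∧
    (∀ r : ℝ, 2 / Real.sqrt ε < r →
      psi1 c ε r ≤ 2 * Real.sqrt 2 * Real.exp 2 / Real.sqrt (ε * (c - ε)) +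
        2 * Real.exp (ε * r ^ 2 / 2) / (ε * (c - ε) * r ^ 2)) := by
  have hr₀ : ε * (2 / √ε) ^ 2 = 4 := by
    rw [div_pow, sq_sqrt hε.le]
    field_simp
    norm_num
  have hlinear : ∀ r : ℝ, 0 ≤ r → r ≤ 2 / √ε → psi1 c ε r ≤ √(2 / (c - ε)) * exp 2 * r :=
    fun r hr hrle => psi1_le_of_mul_sq_le hεc hr (hr₀ ▸ by gcongr)
  refine ⟨fun r hr => hlinear r hr.le, fun r hr => ?_⟩
  have hr₀pos : 0 < 2 / √ε := by positivity
  have hhead : psi1 c ε (2 / √ε) ≤ 2 * √2 * exp 2 / √(ε * (c - ε)) := by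
    refine (hlinear _ hr₀pos.le le_rfl).trans_eq ?_
    have : 0 < √(c - ε) := sqrt_pos.2 (sub_pos.2 hεc)
    rw [sqrt_div zero_le_two, sqrt_mul hε.le]
    field_simp
  rw [psi1_eq_add_integral hεc (2 / √ε)]
  exact add_le_add hhead (integral_exp_mul_gaussianTail_le hεc hr₀pos hr.le hr₀.ge)
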